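/- Let (T0, D0, T1, D1, ..., Tn, {bn,cn,a0,b0}) be a ring of bowties in a matroid M, with Ti = {ai,bi,ci}. Then M\c0,c1,...,cn/a1 is isomorphic to M\a0,b1,a2,a3,...,an/b2. -/

import Mathlib

open Set

namespace MatroidSplitter

variable {α β : Type*}

/-- A circuit of a matroid: a minimal dependent set. -/
def IsCircuit (M : Matroid α) (C : Set α) : Prop :=
  M.Dep C ∧ ∀ D, D ⊂ C → ¬ M.Dep D

/-- A cocircuit: a circuit of the dual matroid. -/
def IsCocircuit (M : Matroid α) (C : Set α) : Prop := IsCircuit M✶ C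

/-- A triangle: a 3-element circuit. -/
def IsTriangle (M : Matroid α) (T : Set α) : Prop := IsCircuit M T ∧ T.encard = 3

/-- A triad: a 3-element cocircuit. -/
def IsTriad (M : Matroid α) (T : Set α) : Prop := IsCocircuit M T ∧ T.encard = 3

/-- Deletion of a set of elements. -/
def del (M : Matroid α) (D : Set α) : Matroid α := M.restrict (M.E \ D)

/-- Contraction of a set of elements. -/
def con (M : Matroid α) (C : Set α) : Matroid α := (del M✶ C)✶

/-- The extended rank of a set: supremum of cardinalities of independent subsets. -/
noncomputable def eRk (M : Matroid α) (X : Set α) : ℕ∞ :=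
  ⨆ I : {I : Set α // M.Indep I ∧ I ⊆ X}, (I : Set α).encard

/-- The extended rank of a matroid. -/
noncomputable def eRank (M : Matroid α) : ℕ∞ := eRk M M.E

/-- `(X, E - X)` is a `k`-separation of `M`:  both sides have at least `k` elements and
`r(X) + r(E - X) ≤ r(M) + k - 1`. -/
def IsKSeparation (M : Matroid α) (k : ℕ) (X : Set α) : Prop :=
  X ⊆ M.E ∧ (k : ℕ∞) ≤ X.encard ∧ (k : ℕ∞) ≤ (M.E \ X).encard ∧
    eRk M X + eRk M (M.E \ X) ≤ eRank M + (k - 1 : ℕ)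

/-- A matroid is `3`-connected if it has no `k`-separation for `k < 3`. -/
def ThreeConnected (M : Matroid α) : Prop :=
  ∀ k : ℕ, k < 3 → ∀ X : Set α, ¬ IsKSeparation M k X

/-- A matroid is internally 4-connected if it is 3-connected and one side of every
3-separation has exactly three elements. -/
def InternallyFourConnected (M : Matroid α) : Prop :=
  ThreeConnected M ∧ ∀ X : Set α, IsKSeparation M 3 X →
    X.encard = 3 ∨ (M.E \ X).encard = 3

/-- A 4-fan `(x₁,x₂,x₃,x₄)`: four distinct elements with `{x₁,x₂,x₃}` a triangle
and `{x₂,x₃,x₄}` a triad. -/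
def IsFan4 (M : Matroid α) (x₁ x₂ x₃ x₄ : α) : Prop :=
  ({x₁, x₂, x₃, x₄} : Set α).encard = 4 ∧
    IsTriangle M {x₁, x₂, x₃} ∧ IsTriad M {x₂, x₃, x₄}

/-- A matroid is `(4,4,S)`-connected if it is 3-connected and one side of every
3-separation is a triangle, a triad, or a 4-element fan. -/
def FourFourSConnected (M : Matroid α) : Prop :=
  ThreeConnected M ∧ ∀ X : Set α, IsKSeparation M 3 X →
    ∃ Z ∈ ({X, M.E \ X} : Set (Set α)),
      IsTriangle M Z ∨ IsTriad M Z ∨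
        ∃ x₁ x₂ x₃ x₄, Z = {x₁, x₂, x₃, x₄} ∧ IsFan4 M x₁ x₂ x₃ x₄

/-- A set is fully closed if it is closed in the matroid and in its dual. -/
def FullyClosed (M : Matroid α) (X : Set α) : Prop :=
  M.closure X ⊆ X ∧ M✶.closure X ⊆ X

/-- The full closure of a set: the smallest fully closed set containing it. -/
def fcl (M : Matroid α) (X : Set α) : Set α :=
  ⋂₀ {Y | X ∩ M.E ⊆ Y ∧ FullyClosed M Y}

/-- A matroid is sequentially 4-connected if it is 3-connected and every
3-separation has a side whose full closure is the ground set. -/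
def SequentiallyFourConnected (M : Matroid α) : Prop :=
  ThreeConnected M ∧ ∀ X : Set α, IsKSeparation M 3 X →
    fcl M X = M.E ∨ fcl M (M.E \ X) = M.E

/-- A binary matroid: every circuit and cocircuit intersect in an even number
of elements. -/
def Binary (M : Matroid α) : Prop :=
  ∀ C K : Set α, IsCircuit M C → IsCocircuit M K → ∃ m : ℕ, (C ∩ K).encard = 2 * m

/-- An isomorphism between matroids via the map `f`. -/
def IsoMWith (M : Matroid α) (N : Matroid β) (f : α → β) : Prop :=
  Set.BijOn f M.E N.E ∧ ∀ I ⊆ M.E, (M.Indep I ↔ N.Indep (f '' I))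

/-- Two matroids are isomorphic. -/
def IsoM (M : Matroid α) (N : Matroid β) : Prop := ∃ f : α → β, IsoMWith M N f

/-- `M` has a minor isomorphic to `N`. -/
def HasMinorIso (M : Matroid α) (N : Matroid β) : Prop :=
  ∃ C D : Set α, IsoM (del (con M C) D) N

/-- A string of bowties `T₀, D₀, T₁, D₁, …, Tₙ` in `M`: triangles
`Tᵢ = {aᵢ, bᵢ, cᵢ}` and cocircuits `Dⱼ = {bⱼ, cⱼ, aⱼ₊₁, bⱼ₊₁}`, with all elements
distinct except that `a₀` may equal `cₙ`. -/
def BowtieString (M : Matroid α) (n : ℕ) (a b c : ℕ → α) : Prop :=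
  1 ≤ n ∧
  (∀ i ≤ n, IsTriangle M {a i, b i, c i}) ∧
  (∀ j < n, IsCocircuit M {b j, c j, a (j+1), b (j+1)}) ∧
  (∀ i ≤ n, ∀ j ≤ n,
    (i ≠ j → a i ≠ a j ∧ b i ≠ b j ∧ c i ≠ c j) ∧
    a i ≠ b j ∧ b i ≠ c j ∧ (a i ≠ c j ∨ (i = 0 ∧ j = n)))

/-- A ring of bowties: a string of bowties with `n ≥ 2` that wraps around, with all
elements distinct. -/
def BowtieRing (M : Matroid α) (n : ℕ) (a b c : ℕ → α) : Prop :=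
  2 ≤ n ∧
  (∀ i ≤ n, IsTriangle M {a i, b i, c i}) ∧
  (∀ j < n, IsCocircuit M {b j, c j, a (j+1), b (j+1)}) ∧
  IsCocircuit M {b n, c n, a 0, b 0} ∧
  (∀ i ≤ n, ∀ j ≤ n,
    (i ≠ j → a i ≠ a j ∧ b i ≠ b j ∧ c i ≠ c j) ∧
    a i ≠ b j ∧ b i ≠ c j ∧ a i ≠ c j)

end MatroidSplitter

namespace MatroidSplitter

/-- A quasi rotor with central triangle `{x₄,x₅,x₆}` and central element `x₅`. -/
def QuasiRotor {α : Type*} (M : Matroid α) (x₁ x₂ x₃ x₄ x₅ x₆ x₇ x₈ x₉ : α) : Prop :=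
  ({x₁, x₂, x₃, x₄, x₅, x₆, x₇, x₈, x₉} : Set α).encard = 9 ∧
  IsTriangle M {x₁, x₂, x₃} ∧ IsTriangle M {x₄, x₅, x₆} ∧ IsTriangle M {x₇, x₈, x₉} ∧
  IsCocircuit M {x₂, x₃, x₄, x₅} ∧ IsCocircuit M {x₅, x₆, x₇, x₈} ∧
  IsTriangle M {x₃, x₅, x₇}

end MatroidSplitter

/-! In `M ／ {z}` the other two elements `u, v` of a triangle `{z, u, v}` are parallel, and in
`M ＼ D` two elements `z, w` of a cocircuit whose other elements lie in `D` are in series, i.e.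
parallel in the dual. The transposition of a parallel pair is an automorphism, and automorphisms
carry minors to isomorphic minors; so we may swap a deleted element of a triangle for another
one, or a contracted element of a cocircuit for another one.

Starting from `M ＼ {c₀, …, cₙ} ／ {a₁}`, the swaps `c₁ ↦ b₁` (in `T₁`), `a₁ ↦ b₀` (in `D₀`),
`c₀ ↦ a₀` (in `T₀`) and `b₀ ↦ bₙ` (in `{bₙ, cₙ, a₀, b₀}`) lead to `M ＼ {a₀, b₁, c₂, …, cₙ} ／ {bₙ}`.
Then for `k = n, …, 2` we swap `c_k ↦ a_k` in `T_k` and, while `k > 2`, `b_k ↦ b_{k-1}` in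
`D_{k-1}`, ending at `M ＼ {a₀, b₁, a₂, …, aₙ} ／ {b₂}`. -/

open scoped Matroid

lemma Equiv.image_swap_of_notMem_of_notMem {α : Type*} [DecidableEq α] {u v : α} {I : Set α}
    (hu : u ∉ I) (hv : v ∉ I) : Equiv.swap u v '' I = I :=
  (image_congr fun _ hx ↦ Equiv.swap_apply_of_ne_of_ne (ne_of_mem_of_not_mem hx hu)
    (ne_of_mem_of_not_mem hx hv)).trans (image_id' I)

namespace MatroidSplitter

variable {α β γ : Type*} {M : Matroid α} {N : Matroid β}

lemma isCircuit_iff {C : Set α} : IsCircuit M C ↔ M.IsCircuit C := by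
  rw [Matroid.IsCircuit, minimal_iff_forall_lt]
  rfl

lemma isCocircuit_iff {K : Set α} : IsCocircuit M K ↔ M.IsCocircuit K :=
  isCircuit_iff

lemma del_eq_delete (M : Matroid α) (D : Set α) : del M D = M ＼ D := rfl

lemma con_eq_contract (M : Matroid α) (C : Set α) : con M C = M ／ C := rfl

lemma IsoM.refl (M : Matroid α) : IsoM M M :=
  ⟨id, bijOn_id _, fun I _ ↦ by rw [image_id]⟩

lemma IsoM.trans {P : Matroid γ} (h₁ : IsoM M N) (h₂ : IsoM N P) : IsoM M P := by
  obtain ⟨f, hf, hfI⟩ := h₁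
  obtain ⟨g, hg, hgI⟩ := h₂
  refine ⟨g ∘ f, hg.comp hf, fun I hI ↦ ?_⟩
  rw [hfI I hI, hgI (f '' I) (hf.mapsTo.image_subset.trans' (image_mono hI)), image_comp]

lemma isoMWith_map (M : Matroid α) (f : α → β) (hf : InjOn f M.E) :
    IsoMWith M (M.map f hf) f :=
  ⟨hf.bijOn_image, fun _ hI ↦ (Matroid.map_image_indep_iff hI).symm⟩

lemma IsoMWith.eq_map {f : α → β} (h : IsoMWith M N f) : N = M.map f h.1.injOn := by
  refine Matroid.ext_indep h.1.image_eq.symm fun J hJ ↦ ?_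
  rw [Matroid.map_indep_iff]
  refine ⟨fun hJi ↦ ?_, ?_⟩
  · obtain ⟨I, hIE, rfl⟩ := subset_image_iff.1 (hJ.trans h.1.image_eq.symm.subset)
    exact ⟨I, (h.2 I hIE).2 hJi, rfl⟩
  · rintro ⟨I, hI, rfl⟩
    exact (h.2 I hI.subset_ground).1 hI

lemma IsoMWith.dual {f : α → β} (h : IsoMWith M N f) : IsoMWith M✶ N✶ f := by
  rw [h.eq_map, Matroid.map_dual]
  exact isoMWith_map _ _ _

lemma IsoMWith.delete {e : α ≃ β} (h : IsoMWith M N e) (X : Set α) :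
    IsoMWith (M ＼ X) (N ＼ e '' X) e := by
  refine ⟨?_, fun I hI ↦ ?_⟩
  · rw [Matroid.delete_ground, Matroid.delete_ground, ← h.1.image_eq, ← image_sdiff e.injective]
    exact e.injective.injOn.bijOn_image
  · rw [Matroid.delete_indep_iff, Matroid.delete_indep_iff, h.2 I (hI.trans sdiff_subset),
      disjoint_image_iff e.injective]

lemma IsoMWith.contract {e : α ≃ β} (h : IsoMWith M N e) (X : Set α) :
    IsoMWith (M ／ X) (N ／ e '' X) e :=
  (h.dual.delete X).dual

end MatroidSplitter

namespace Matroid.IsCircuit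

open MatroidSplitter

variable {α : Type*} [DecidableEq α] {M : Matroid α}

lemma indep_image_swap_of_mem_of_notMem {u v : α} {I : Set α}
    (hC : M.IsCircuit {u, v}) (hI : M.Indep I) (hu : u ∈ I) (hv : v ∉ I) :
    M.Indep (Equiv.swap u v '' I) := by
  have huv : u ≠ v := ne_of_mem_of_not_mem hu hv
  rw [Equiv.image_swap_of_mem_of_notMem hu hv, insert_sdiff_of_notMem (t := {u}) _ huv.symm,
    (hI.sdiff {u}).insert_indep_iff_of_notMem (fun h ↦ hv h.1)]
  refine ⟨hC.subset_ground (by simp), fun hvcl ↦ hI.notMem_closure_sdiff_of_mem hu ?_⟩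
  have hucl : u ∈ M.closure {v} := by
    simpa [pair_sdiff_left huv] using hC.mem_closure_sdiff_singleton_of_mem (e := u) (by simp)
  exact M.closure_subset_closure_of_subset_closure (singleton_subset_iff.2 hvcl) hucl

lemma isoMWith_swap {u v : α} (hC : M.IsCircuit {u, v}) :
    IsoMWith M M (Equiv.swap u v) := by
  have key : ∀ I, M.Indep I → M.Indep (Equiv.swap u v '' I) := by
    intro I hI
    by_cases hu : u ∈ I <;> by_cases hv : v ∈ I
    · exact absurd (hI.subset (pair_subset hu hv)) hC.not_indep
    · exact hC.indep_image_swap_of_mem_of_notMem hI hu hv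
    · rw [Equiv.swap_comm]
      exact (pair_comm u v ▸ hC).indep_image_swap_of_mem_of_notMem hI hv hu
    · rwa [Equiv.image_swap_of_notMem_of_notMem hu hv]
  have hE : {u, v} ⊆ M.E := hC.subset_ground
  refine ⟨Equiv.swap_bijOn_self (iff_of_true (hE (by simp)) (hE (by simp))),
    fun I _ ↦ ⟨key I, fun h ↦ ?_⟩⟩
  simpa [image_image] using key _ h

end Matroid.IsCircuit

namespace MatroidSplitter

variable {α : Type*} {M : Matroid α}

lemma isoM_delete_swap_of_isCircuit [DecidableEq α] {D : Set α} {z u v : α}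
    (hC : M.IsCircuit {z, u, v}) (hzu : z ≠ u) (hzv : z ≠ v) (hzD : z ∉ D) :
    IsoM (M ＼ D ／ {z}) (M ＼ (Equiv.swap u v '' D) ／ {z}) := by
  have hpar : (M ／ {z}).IsCircuit {u, v} := by
    have h := hC.contract_sdiff_isCircuit (K := {u, v}) (by simp) (subset_insert _ _)
    rwa [insert_sdiff_eq_singleton (by simp [hzu, hzv])] at h
  have hzD' : z ∉ Equiv.swap u v '' D := by
    rintro ⟨y, hy, hyz⟩
    rw [Equiv.swap_apply_eq_iff, Equiv.swap_apply_of_ne_of_ne hzu hzv] at hyz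
    exact hzD (hyz ▸ hy)
  rw [← Matroid.contract_delete_comm _ (disjoint_singleton_left.2 hzD),
    ← Matroid.contract_delete_comm _ (disjoint_singleton_left.2 hzD')]
  exact ⟨_, hpar.isoMWith_swap.delete D⟩

lemma isoM_contract_swap_of_isCocircuit {D K : Set α} {z w : α} (hK : M.IsCocircuit K)
    (hz : z ∈ K) (hw : w ∈ K) (hKD : K \ {z, w} ⊆ D) (hzD : z ∉ D) (hwD : w ∉ D) :
    IsoM (M ＼ D ／ {z}) (M ＼ D ／ {w}) := by
  classical
  have hser : (M ＼ (K \ {z, w}))✶.IsCircuit {z, w} := by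
    rw [Matroid.dual_delete]
    exact hK.isCircuit.contract_sdiff_isCircuit (by simp) (pair_subset hz hw)
  have hiso := (hser.isoMWith_swap.dual.delete D).contract {z}
  rw [Matroid.dual_dual, Equiv.image_swap_of_notMem_of_notMem hzD hwD, image_singleton,
    Equiv.swap_apply_left, Matroid.delete_delete, union_eq_right.2 hKD] at hiso
  exact ⟨_, hiso⟩

/-- `deletedAt a b c k '' Iic n` is `{a₀, b₁, c₂, …, c_{k-1}, a_k, …, aₙ}`. -/
def deletedAt (a b c : ℕ → α) (k j : ℕ) : α :=
  if j = 0 then a 0 else if j = 1 then b 1 else if j < k then c j else a j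

lemma c_mem_deletedAt {a b c : ℕ → α} {n k j : ℕ} (hj : 2 ≤ j) (hjk : j < k) (hjn : j ≤ n) :
    c j ∈ deletedAt a b c k '' Iic n :=
  ⟨j, hjn, by rw [deletedAt, if_neg (by omega), if_neg (by omega), if_pos hjk]⟩

lemma a_mem_deletedAt {a b c : ℕ → α} {n k : ℕ} (hk : 2 ≤ k) (hkn : k ≤ n) :
    a k ∈ deletedAt a b c k '' Iic n :=
  ⟨k, hkn, by rw [deletedAt, if_neg (by omega), if_neg (by omega), if_neg k.lt_irrefl]⟩

lemma a_zero_mem_deletedAt {a b c : ℕ → α} {n k : ℕ} : a 0 ∈ deletedAt a b c k '' Iic n :=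
  ⟨0, Nat.zero_le n, if_pos rfl⟩

lemma image_deletedAt_two {a b c : ℕ → α} {n : ℕ} (hn : 1 ≤ n) :
    deletedAt a b c 2 '' Iic n = {a 0, b 1} ∪ a '' Icc 2 n := by
  ext x
  simp only [mem_image, mem_Iic, mem_union, mem_insert_iff, mem_singleton_iff, mem_Icc,
    deletedAt]
  constructor
  · rintro ⟨j, hj, rfl⟩
    split_ifs <;> grind
  · rintro ((rfl | rfl) | ⟨j, hj, rfl⟩)
    · exact ⟨0, by simp⟩
    · exact ⟨1, hn, by simp⟩
    · exact ⟨j, hj.2, by grind⟩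

namespace BowtieRing

variable {n : ℕ} {a b c : ℕ → α} {i j k : ℕ}

lemma a_ne_b (h : BowtieRing M n a b c) (hi : i ≤ n) (hj : j ≤ n) : a i ≠ b j :=
  (h.2.2.2.2 i hi j hj).2.1

lemma b_ne_c (h : BowtieRing M n a b c) (hi : i ≤ n) (hj : j ≤ n) : b i ≠ c j :=
  (h.2.2.2.2 i hi j hj).2.2.1

lemma a_ne_c (h : BowtieRing M n a b c) (hi : i ≤ n) (hj : j ≤ n) : a i ≠ c j :=
  (h.2.2.2.2 i hi j hj).2.2.2

lemma isCircuit_bca (h : BowtieRing M n a b c) (hi : i ≤ n) :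
    M.IsCircuit {b i, c i, a i} := by
  rw [pair_comm, insert_comm, ← isCircuit_iff]
  exact (h.2.1 i hi).1

lemma isCircuit_acb (h : BowtieRing M n a b c) (hi : i ≤ n) :
    M.IsCircuit {a i, c i, b i} := by
  rw [pair_comm, ← isCircuit_iff]
  exact (h.2.1 i hi).1

lemma b_notMem_deletedAt (h : BowtieRing M n a b c) (hi : i ≤ n) (hi1 : i ≠ 1) :
    b i ∉ deletedAt a b c k '' Iic n := by
  obtain ⟨-, -, -, -, hdistinct⟩ := h
  rintro ⟨j, hj, hji⟩
  grind [deletedAt]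

lemma image_swap_deletedAt [DecidableEq α] (h : BowtieRing M n a b c) (hk : 2 ≤ k) (hkn : k ≤ n) :
    Equiv.swap (c k) (a k) '' (deletedAt a b c (k + 1) '' Iic n) = deletedAt a b c k '' Iic n := by
  obtain ⟨-, -, -, -, hdistinct⟩ := h
  rw [image_image]
  refine image_congr fun j hj ↦ ?_
  grind [deletedAt]

lemma isoM_delete_swap_c_a (h : BowtieRing M n a b c) (hk : 2 ≤ k) (hkn : k ≤ n) :
    IsoM (M ＼ deletedAt a b c (k + 1) '' Iic n ／ {b k})
      (M ＼ deletedAt a b c k '' Iic n ／ {b k}) := by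
  classical
  rw [← h.image_swap_deletedAt hk hkn]
  exact isoM_delete_swap_of_isCircuit (h.isCircuit_bca hkn) (h.b_ne_c hkn hkn)
    (h.a_ne_b hkn hkn).symm (h.b_notMem_deletedAt hkn (by omega))

lemma isoM_contract_swap_b_succ_b (h : BowtieRing M n a b c) (hk : 2 ≤ k) (hkn : k < n) :
    IsoM (M ＼ deletedAt a b c (k + 1) '' Iic n ／ {b (k + 1)})
      (M ＼ deletedAt a b c (k + 1) '' Iic n ／ {b k}) := by
  classical
  refine isoM_contract_swap_of_isCocircuit (isCocircuit_iff.1 (h.2.2.1 k hkn)) (by simp) (by simp)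
    ?_ (h.b_notMem_deletedAt hkn (by omega)) (h.b_notMem_deletedAt hkn.le (by omega))
  have hc : c k ∈ deletedAt a b c (k + 1) '' Iic n := c_mem_deletedAt hk k.lt_succ_self hkn.le
  have ha : a (k + 1) ∈ deletedAt a b c (k + 1) '' Iic n := a_mem_deletedAt (by omega) hkn
  grind [sdiff_subset_iff, insert_subset_iff]

lemma isoM_contract_a_one_b_zero (h : BowtieRing M n a b c) :
    IsoM (M ＼ c '' Iic n ／ {a 1}) (M ＼ Function.update c 1 (b 1) '' Iic n ／ {b 0}) := by
  classical
  have hn : 2 ≤ n := h.1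
  have hdistinct := h.2.2.2.2
  set S := Function.update c 1 (b 1) '' Iic n
  have hS : Equiv.swap (c 1) (b 1) '' (c '' Iic n) = S := by
    rw [image_image]
    exact image_congr fun j hj ↦ by grind [Function.update]
  have hc₀ : c 0 ∈ S := ⟨0, Nat.zero_le n, by simp⟩
  have hb₁ : b 1 ∈ S := ⟨1, by simp; omega, by simp⟩
  have ha₁ : a 1 ∉ S := by
    rintro ⟨j, hj, hja⟩
    grind [Function.update]
  have hb₀ : b 0 ∉ S := by
    rintro ⟨j, hj, hjb⟩
    grind [Function.update]
  have ha₁' : a 1 ∉ c '' Iic n := by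
    rintro ⟨j, hj, hja⟩
    exact h.a_ne_c (by omega) hj hja.symm
  refine .trans (hS ▸ isoM_delete_swap_of_isCircuit (h.isCircuit_acb (by omega))
    (h.a_ne_c (by omega) (by omega)) (h.a_ne_b (by omega) (by omega)) ha₁') ?_
  refine isoM_contract_swap_of_isCocircuit (isCocircuit_iff.1 (h.2.2.1 0 (by omega)))
    (by simp) (by simp) ?_ ha₁ hb₀
  grind [sdiff_subset_iff, insert_subset_iff]

lemma isoM_contract_b_zero_b_last (h : BowtieRing M n a b c) :
    IsoM (M ＼ Function.update c 1 (b 1) '' Iic n ／ {b 0})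
      (M ＼ deletedAt a b c (n + 1) '' Iic n ／ {b n}) := by
  classical
  have hn : 2 ≤ n := h.1
  have hdistinct := h.2.2.2.2
  have hE : Equiv.swap (c 0) (a 0) '' (Function.update c 1 (b 1) '' Iic n) =
      deletedAt a b c (n + 1) '' Iic n := by
    rw [image_image]
    exact image_congr fun j hj ↦ by grind [Function.update, deletedAt]
  have hb₀ : b 0 ∉ Function.update c 1 (b 1) '' Iic n := by
    rintro ⟨j, hj, hjb⟩
    grind [Function.update]
  have hcₙ : c n ∈ deletedAt a b c (n + 1) '' Iic n := c_mem_deletedAt hn n.lt_succ_self le_rfl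
  have ha₀ : a 0 ∈ deletedAt a b c (n + 1) '' Iic n := a_zero_mem_deletedAt
  refine .trans (hE ▸ isoM_delete_swap_of_isCircuit (h.isCircuit_bca (Nat.zero_le n))
    (h.b_ne_c (Nat.zero_le n) (Nat.zero_le n)) (h.a_ne_b (Nat.zero_le n) (Nat.zero_le n)).symm
    hb₀) ?_
  refine isoM_contract_swap_of_isCocircuit (isCocircuit_iff.1 h.2.2.2.1) (by simp) (by simp)
    ?_ (h.b_notMem_deletedAt (Nat.zero_le n) (by omega)) (h.b_notMem_deletedAt le_rfl (by omega))
  grind [sdiff_subset_iff, insert_subset_iff]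

lemma isoM_deletedAt_two (h : BowtieRing M n a b c) {k : ℕ} (hk : 2 ≤ k) (hkn : k ≤ n) :
    IsoM (M ＼ deletedAt a b c k '' Iic n ／ {b k}) (M ＼ deletedAt a b c 2 '' Iic n ／ {b 2}) := by
  induction k, hk using Nat.le_induction with
  | base => exact IsoM.refl _
  | succ k hk ih =>
    exact (h.isoM_contract_swap_b_succ_b hk hkn).trans <|
      (h.isoM_delete_swap_c_a hk (by omega)).trans (ih (by omega))

end BowtieRing

end MatroidSplitter

open MatroidSplitter in
/-- in a ring of bowties, `M \ c₀,…,cₙ / a₁ ≅ M \ a₀,b₁,a₂,…,aₙ / b₂`. -/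
theorem statement_9 {α : Type*} (M : Matroid α)
    (n : ℕ) (a b c : ℕ → α) (h : BowtieRing M n a b c) :
    IsoM (con (del M (c '' Set.Iic n)) {a 1})
         (con (del M ({a 0, b 1} ∪ a '' Set.Icc 2 n)) {b 2}) := by
  have hn : 2 ≤ n := h.1
  rw [con_eq_contract, con_eq_contract, del_eq_delete, del_eq_delete,
    ← image_deletedAt_two (b := b) (c := c) (by omega)]
  exact h.isoM_contract_a_one_b_zero.trans <| h.isoM_contract_b_zero_b_last.trans <|
    (h.isoM_delete_swap_c_a hn le_rfl).trans (h.isoM_deletedAt_two hn le_rfl)
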